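/- Let m ≥ 1, let Ψ be a set of pairs of probability measures on ℝ^m, let ε > 0, W > 0 and δ ∈ [0, 1]. Suppose that for every pair (μᵢ, μⱼ) ∈ Ψ the measures μᵢ and μⱼ are (W, δ)-close. Then the additive-noise mechanism with noise Lapₘ(W/ε) satisfies (ε, δ)-distribution privacy with respect to Ψ: for every pair (μᵢ, μⱼ) ∈ Ψ and every measurable set S ⊆ ℝ^m, (μᵢ ∗ Lapₘ(W/ε))(S) ≤ e^ε · (μⱼ ∗ Lapₘ(W/ε))(S) + δ. -/

import Mathlib

/-!
With `ζ = Lapₘ(b)`, `b = W / ε`, write `(μᵢ ∗ ζ)(S) = ∫ ζ(S - x) dμᵢ(x)` and integrate against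
the coupling `γ`. On the good set `R` the points `x, y` are `W`-close in `ℓ¹`, and the Laplace
density `∏ₖ e^{-|wₖ|/b} / 2b` changes by a factor at most `e^{‖x - y‖₁ / b} ≤ e^ε` under a shift
by `x - y`, so `ζ(S - x) ≤ e^ε ζ(S - y)`. Off `R`, which has `γ`-mass at most `δ`, we only use
`ζ(S - x) ≤ 1`.
-/

open MeasureTheory ProbabilityTheory

/-- The Laplace measure on `ℝ^m` with scale `b`: `m` i.i.d. Laplace(`b`) coordinates. -/
noncomputable def lapPi (m : ℕ) (b : ℝ) : Measure (Fin m → ℝ) :=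
  MeasureTheory.volume.withDensity
    (fun x => ENNReal.ofReal (∏ k, (1 / (2 * b)) * Real.exp (-|x k| / b)))

/-- Convolution of two measures on `ℝ^m`: the law of `X + Z` with `X ∼ μ`, `Z ∼ ν` independent. -/
noncomputable def mconv {m : ℕ} (μ ν : Measure (Fin m → ℝ)) : Measure (Fin m → ℝ) :=
  (μ.prod ν).map (fun p => p.1 + p.2)

/-- The `L¹` norm on `ℝ^m`. -/
def l1norm {m : ℕ} (x : Fin m → ℝ) : ℝ := ∑ k, |x k|

/-- `γ` is a coupling of `μ` and `ν`. -/
def IsCoupling {m : ℕ} (γ : Measure ((Fin m → ℝ) × (Fin m → ℝ)))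
    (μ ν : Measure (Fin m → ℝ)) : Prop :=
  γ.map Prod.fst = μ ∧ γ.map Prod.snd = ν

/-- `μ` and `ν` are `(W, δ)`-close: there are a coupling `γ` and a measurable set `R`
with `γ(R) ≥ 1 − δ` and `‖x − y‖₁ ≤ W` for all `(x, y) ∈ R`. -/
def WDClose {m : ℕ} (μ ν : Measure (Fin m → ℝ)) (W δ : ℝ) : Prop :=
  ∃ γ : Measure ((Fin m → ℝ) × (Fin m → ℝ)), IsCoupling γ μ ν ∧
    ∃ R : Set ((Fin m → ℝ) × (Fin m → ℝ)), MeasurableSet R ∧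
      ENNReal.ofReal (1 - δ) ≤ γ R ∧ ∀ xy ∈ R, l1norm (xy.1 - xy.2) ≤ W

open scoped ENNReal

noncomputable def laplaceDensity (b t : ℝ) : ℝ := 1 / (2 * b) * Real.exp (-|t| / b)

lemma lapPi_eq_withDensity (m : ℕ) (b : ℝ) :
    lapPi m b = volume.withDensity fun x => ENNReal.ofReal (∏ k, laplaceDensity b (x k)) :=
  rfl

lemma integral_laplaceDensity {b : ℝ} (hb : 0 < b) : ∫ t, laplaceDensity b t = 1 := by
  have h_half : ∫ t in Set.Ioi (0 : ℝ), Real.exp (-b⁻¹ * t) = b := by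
    rw [integral_exp_mul_Ioi (by simpa using hb) 0]
    simp
  have h_abs : ∫ t, Real.exp (-|t| / b) = 2 * b := by
    simp_rw [neg_div, div_eq_inv_mul, ← neg_mul]
    rw [integral_comp_abs (f := fun t => Real.exp (-b⁻¹ * t)), h_half]
  unfold laplaceDensity
  rw [integral_const_mul, h_abs]
  field_simp

lemma integrable_laplaceDensity {b : ℝ} (hb : 0 < b) : Integrable (laplaceDensity b) :=
  Integrable.of_integral_ne_zero (by simp [integral_laplaceDensity hb])

lemma isProbabilityMeasure_lapPi (m : ℕ) {b : ℝ} (hb : 0 < b) :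
    IsProbabilityMeasure (lapPi m b) := by
  have h_nonneg : 0 ≤ᵐ[volume] fun x : Fin m → ℝ => ∏ k, laplaceDensity b (x k) :=
    .of_forall fun x => Finset.prod_nonneg fun k _ => by unfold laplaceDensity; positivity
  have h_int : Integrable (fun x : Fin m → ℝ => ∏ k, laplaceDensity b (x k)) :=
    Integrable.fintype_prod (f := fun _ => laplaceDensity b)
      fun _ => integrable_laplaceDensity hb
  constructor
  rw [lapPi_eq_withDensity, withDensity_apply _ MeasurableSet.univ, Measure.restrict_univ,
    ← ofReal_integral_eq_lintegral_ofReal h_int h_nonneg, volume_pi,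
    integral_fintype_prod_eq_prod (fun _ => laplaceDensity b)]
  simp [integral_laplaceDensity hb]

lemma laplaceDensity_sub_le {b : ℝ} (hb : 0 < b) (w x y : ℝ) :
    laplaceDensity b (w - x) ≤ Real.exp (|x - y| / b) * laplaceDensity b (w - y) := by
  have h_tri : |w - y| ≤ |w - x| + |x - y| := abs_sub_le w x y
  unfold laplaceDensity
  rw [mul_left_comm, ← Real.exp_add]
  gcongr
  rw [← add_div, div_le_div_iff_of_pos_right hb]
  linarith

lemma prod_laplaceDensity_sub_le {m : ℕ} {b : ℝ} (hb : 0 < b) (w x y : Fin m → ℝ) :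
    ∏ k, laplaceDensity b (w k - x k)
      ≤ Real.exp (l1norm (x - y) / b) * ∏ k, laplaceDensity b (w k - y k) := by
  have h_nonneg : ∀ t, 0 ≤ laplaceDensity b t := fun t => by unfold laplaceDensity; positivity
  calc ∏ k, laplaceDensity b (w k - x k)
      ≤ ∏ k, Real.exp (|x k - y k| / b) * laplaceDensity b (w k - y k) :=
        Finset.prod_le_prod (fun k _ => h_nonneg _) fun k _ => laplaceDensity_sub_le hb _ _ _
    _ = Real.exp (l1norm (x - y) / b) * ∏ k, laplaceDensity b (w k - y k) := by
        rw [Finset.prod_mul_distrib, ← Real.exp_sum, ← Finset.sum_div]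
        rfl

lemma withDensity_preimage_add_left {G : Type*} [AddGroup G] [MeasurableSpace G]
    [MeasurableAdd G] (μ : Measure G) [μ.IsAddLeftInvariant] (f : G → ℝ≥0∞) (x : G)
    {S : Set G} (hS : MeasurableSet S) :
    μ.withDensity f ((x + ·) ⁻¹' S) = ∫⁻ w in S, f (-x + w) ∂μ := by
  rw [withDensity_apply _ (measurable_const_add x hS), ← (measurePreserving_add_left μ x)
    |>.setLIntegral_comp_preimage_emb (measurableEmbedding_addLeft x) (fun w => f (-x + w))]
  simp only [neg_add_cancel_left]

lemma lapPi_preimage_add_left_le {m : ℕ} {b : ℝ} (hb : 0 < b) (x y : Fin m → ℝ)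
    {S : Set (Fin m → ℝ)} (hS : MeasurableSet S) :
    lapPi m b ((x + ·) ⁻¹' S)
      ≤ ENNReal.ofReal (Real.exp (l1norm (x - y) / b)) * lapPi m b ((y + ·) ⁻¹' S) := by
  simp only [lapPi_eq_withDensity, withDensity_preimage_add_left _ _ _ hS]
  rw [← lintegral_const_mul' _ _ ENNReal.ofReal_ne_top]
  refine lintegral_mono fun w => ?_
  rw [← ENNReal.ofReal_mul (Real.exp_nonneg _)]
  gcongr
  simpa [neg_add_eq_sub] using prod_laplaceDensity_sub_le hb w x y

lemma mconv_apply {m : ℕ} (μ ν : Measure (Fin m → ℝ)) [SFinite ν]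
    {S : Set (Fin m → ℝ)} (hS : MeasurableSet S) :
    mconv μ ν S = ∫⁻ x, ν ((x + ·) ⁻¹' S) ∂μ := by
  have h_add : Measurable fun p : (Fin m → ℝ) × (Fin m → ℝ) => p.1 + p.2 :=
    measurable_fst.add measurable_snd
  rw [mconv, Measure.map_apply h_add hS, Measure.prod_apply (h_add hS)]
  rfl

lemma lintegral_le_of_coupling {m : ℕ} {μ ν : Measure (Fin m → ℝ)} [IsProbabilityMeasure μ]
    {γ : Measure ((Fin m → ℝ) × (Fin m → ℝ))} (hγ : IsCoupling γ μ ν)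
    {R : Set ((Fin m → ℝ) × (Fin m → ℝ))} (hR : MeasurableSet R) {δ : ℝ}
    (hR_mass : ENNReal.ofReal (1 - δ) ≤ γ R) {f : (Fin m → ℝ) → ℝ≥0∞} (hf : Measurable f)
    (hf_le_one : ∀ x, f x ≤ 1) {c : ℝ≥0∞} (hf_R : ∀ xy ∈ R, f xy.1 ≤ c * f xy.2) :
    ∫⁻ x, f x ∂μ ≤ c * ∫⁻ y, f y ∂ν + ENNReal.ofReal δ := by
  have : IsProbabilityMeasure (γ.map Prod.fst) := hγ.1 ▸ ‹_›
  have : IsProbabilityMeasure γ := Measure.isProbabilityMeasure_of_map Prod.fst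
  have h_compl : γ Rᶜ ≤ ENNReal.ofReal δ := by
    rw [prob_compl_eq_one_sub hR, tsub_le_iff_right]
    calc (1 : ℝ≥0∞) = ENNReal.ofReal (δ + (1 - δ)) := by simp
      _ ≤ ENNReal.ofReal δ + ENNReal.ofReal (1 - δ) := ENNReal.ofReal_add_le
      _ ≤ ENNReal.ofReal δ + γ R := by gcongr
  have h_on_R : ∫⁻ xy in R, f xy.1 ∂γ ≤ c * ∫⁻ xy, f xy.2 ∂γ :=
    calc ∫⁻ xy in R, f xy.1 ∂γ ≤ ∫⁻ xy in R, c * f xy.2 ∂γ :=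
          setLIntegral_mono (by fun_prop) hf_R
      _ ≤ ∫⁻ xy, c * f xy.2 ∂γ := setLIntegral_le_lintegral _ _
      _ = c * ∫⁻ xy, f xy.2 ∂γ := lintegral_const_mul c (by fun_prop)
  have h_off_R : ∫⁻ xy in Rᶜ, f xy.1 ∂γ ≤ ENNReal.ofReal δ :=
    calc ∫⁻ xy in Rᶜ, f xy.1 ∂γ ≤ ∫⁻ _ in Rᶜ, 1 ∂γ := lintegral_mono fun xy => hf_le_one xy.1
      _ = γ Rᶜ := setLIntegral_one _
      _ ≤ ENNReal.ofReal δ := h_compl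
  rw [← hγ.1, ← hγ.2, lintegral_map hf measurable_fst, lintegral_map hf measurable_snd,
    ← lintegral_add_compl _ hR]
  exact add_le_add h_on_R h_off_R

theorem approximate_wasserstein_mechanism_general
    (m : ℕ)
    (Ψ : Set (Measure (Fin m → ℝ) × Measure (Fin m → ℝ)))
    (ε W δ : ℝ) (hε : 0 < ε) (hW : 0 < W)
    (hprob : ∀ p ∈ Ψ, IsProbabilityMeasure p.1 ∧ IsProbabilityMeasure p.2)
    (hclose : ∀ p ∈ Ψ, WDClose p.1 p.2 W δ) :
    ∀ p ∈ Ψ, ∀ S : Set (Fin m → ℝ), MeasurableSet S →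
      mconv p.1 (lapPi m (W / ε)) S
        ≤ ENNReal.ofReal (Real.exp ε) * mconv p.2 (lapPi m (W / ε)) S
          + ENNReal.ofReal δ := by
  intro p hp S hS
  obtain ⟨γ, hγ, R, hR, hR_mass, hR_close⟩ := hclose p hp
  have hb : 0 < W / ε := div_pos hW hε
  have := (hprob p hp).1
  have := isProbabilityMeasure_lapPi m hb
  rw [mconv_apply _ _ hS, mconv_apply _ _ hS]
  refine lintegral_le_of_coupling hγ hR hR_mass
    (measurable_measure_prodMk_left (measurable_add hS)) (fun _ => prob_le_one)
    fun xy hxy => (lapPi_preimage_add_left_le hb xy.1 xy.2 hS).trans ?_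
  have h_exponent : l1norm (xy.1 - xy.2) / (W / ε) ≤ ε := by
    rw [div_le_iff₀ hb]
    calc l1norm (xy.1 - xy.2) ≤ W := hR_close xy hxy
      _ = ε * (W / ε) := by field_simp
  gcongr ENNReal.ofReal (Real.exp ?_) * _

/-- **Approximate Wasserstein Mechanism** (Theorem 3.4): if every pair `(μᵢ, μⱼ) ∈ Ψ`
is `(W, δ)`-close, then adding `Lapₘ(W/ε)` noise gives `(ε, δ)`-distribution privacy
with respect to `Ψ`. -/
theorem approximate_wasserstein_mechanism
    (m : ℕ) (hm : 1 ≤ m)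
    (Ψ : Set (Measure (Fin m → ℝ) × Measure (Fin m → ℝ)))
    (ε W δ : ℝ) (hε : 0 < ε) (hW : 0 < W) (hδ : 0 ≤ δ ∧ δ ≤ 1)
    (hprob : ∀ p ∈ Ψ, IsProbabilityMeasure p.1 ∧ IsProbabilityMeasure p.2)
    (hclose : ∀ p ∈ Ψ, WDClose p.1 p.2 W δ) :
    ∀ p ∈ Ψ, ∀ S : Set (Fin m → ℝ), MeasurableSet S →
      mconv p.1 (lapPi m (W / ε)) S
        ≤ ENNReal.ofReal (Real.exp ε) * mconv p.2 (lapPi m (W / ε)) S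
          + ENNReal.ofReal δ :=
  approximate_wasserstein_mechanism_general m Ψ ε W δ hε hW hprob hclose
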